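/- Let Γ be a set of subsets of a set A. The cardinality of the set {Pol(Q) : Q ⊆ DD(Γ)} of polymorphism clones of sets of relations disjunctively definable from Γ is at most the cardinality of the set of downsets of the poset (ℕ^Γ, ⊑). -/

import Mathlib

/-- The `n`-ary cross relation defined by the tuple `γ` of unary relations:
`{(x₁,…,xₙ) : x₁ ∈ γ₁ ∨ … ∨ xₙ ∈ γₙ}`. -/
def Cross {A : Type*} {n : ℕ} (γ : Fin n → Set A) : Set (Fin n → A) :=
  {x | ∃ i, x i ∈ γ i}

/-- A finitary relation on `A`: an arity together with a set of tuples. -/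
abbrev FinRel (A : Type*) := Σ n : ℕ, Set (Fin n → A)

/-- A `k`-ary operation `f` preserves an `n`-ary relation `ρ`. -/
def Preserves {A : Type*} {k n : ℕ} (f : (Fin k → A) → A) (ρ : Set (Fin n → A)) : Prop :=
  ∀ r : Fin k → Fin n → A, (∀ j, r j ∈ ρ) → (fun i => f fun j => r j i) ∈ ρ

/-- A finitary operation on `A` of positive arity `k + 1`. -/
abbrev Op (A : Type*) := Σ k : ℕ, (Fin (k + 1) → A) → A

/-- The polymorphism clone of a set of finitary relations. -/
def Pol {A : Type*} (Q : Set (FinRel A)) : Set (Op A) :=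
  {f | ∀ ρ ∈ Q, Preserves f.2 ρ.2}

/-- Relations disjunctively definable from the unary language `Γ`. -/
def DD {A : Type*} (Γ : Set (Set A)) : Set (FinRel A) :=
  {ρ | 1 ≤ ρ.1 ∧ ∃ γ : Fin ρ.1 → Set A, (∀ i, γ i ∈ Γ) ∧ ρ.2 = Cross γ}

/-- Support of a tuple of naturals. -/
def supp {I : Type*} (x : I → ℕ) : Set I := {i | x i ≠ 0}

/-- The order `⊑` on `ℕ^I`: pointwise `≤` together with equal supports. -/
def sle {I : Type*} (x y : I → ℕ) : Prop := (∀ i, x i ≤ y i) ∧ supp x = supp y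

/-- Downsets of the poset `(ℕ^I, ⊑)`. -/
def IsSleDownset {I : Type*} (X : Set (I → ℕ)) : Prop :=
  ∀ x ∈ X, ∀ y, sle y x → y ∈ X

open Classical in
/-- The canonical parameter tuple of a relation: the unique tuple of members of `Γ`
defining it as a cross if it is a proper subset of the full power, and `(A,…,A)` otherwise. -/
noncomputable def param {A : Type*} (Γ : Set (Set A)) (ρ : FinRel A) : Fin ρ.1 → Set A :=
  if ρ.2 = Set.univ then fun _ => Set.univ
  else if h : ∃ γ : Fin ρ.1 → Set A, (∀ i, γ i ∈ Γ) ∧ ρ.2 = Cross γ then h.choose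
  else fun _ => ∅

/-- The pattern of a relation: how often each `γ ∈ Γ` occurs in its canonical parameter. -/
noncomputable def pt {A : Type*} (Γ : Set (Set A)) (ρ : FinRel A) : ↥Γ → ℕ :=
  fun γ => Nat.card {i : Fin ρ.1 // param Γ ρ i = (γ : Set A)}

/-- The encoding map `I`: the downset of `(ℕ^Γ, ⊑)` generated by the patterns of `Q`. -/
def enc {A : Type*} (Γ : Set (Set A)) (Q : Set (FinRel A)) : Set (↥Γ → ℕ) :=
  {x | ∃ ρ ∈ Q, sle x (pt Γ ρ)}

/-- `F^Inv`: the relations in `DD Γ` preserved by every operation in `F`. -/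
def InvDD {A : Type*} (Γ : Set (Set A)) (F : Set (Op A)) : Set (FinRel A) :=
  {ρ | ρ ∈ DD Γ ∧ ∀ f ∈ F, Preserves f.2 ρ.2}

/-!
Send the clone `F = Pol Q` to the downset of `(ℕ^Γ, ⊑)` generated by the patterns of the
relations of `DD Γ` that `F` preserves. Since `Pol (InvDD Γ (Pol Q)) = Pol Q`, it suffices that
a set `Q ⊆ DD Γ` determines `Pol Q` through this downset alone. This is the transfer principle:
if `pt ρ ⊑ pt σ`, the multiplicities allow a surjection `π` of the coordinates of `σ` onto those
of `ρ` with `param ρ ∘ π = param σ`, so `σ` is `ρ` with coordinates duplicated, and every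
operation preserving `σ` preserves `ρ`.
-/

lemma sle_refl {I : Type*} (x : I → ℕ) : sle x x := ⟨fun _ => le_rfl, rfl⟩

lemma sle.trans {I : Type*} {x y z : I → ℕ} (hxy : sle x y) (hyz : sle y z) : sle x z :=
  ⟨fun i => (hxy.1 i).trans (hyz.1 i), hxy.2.trans hyz.2⟩

lemma Preserves.cross_of_comp_surjective {A : Type*} {k m n : ℕ} {f : (Fin k → A) → A}
    {γ : Fin n → Set A} {π : Fin m → Fin n} (hπ : Function.Surjective π)
    (hf : Preserves f (Cross (γ ∘ π))) : Preserves f (Cross γ) := by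
  intro r hr
  have hrπ : ∀ j, (fun i' => r j (π i')) ∈ Cross (γ ∘ π) := by
    intro j
    obtain ⟨i, hi⟩ := hr j
    obtain ⟨i', rfl⟩ := hπ i
    exact ⟨i', hi⟩
  obtain ⟨i', hi'⟩ := hf _ hrπ
  exact ⟨π i', hi'⟩

lemma exists_surjective_of_card_le {α β : Type*} [Finite α] [Finite β]
    (hcard : Nat.card β ≤ Nat.card α) (hne : Nonempty α → Nonempty β) :
    ∃ f : α → β, Function.Surjective f := by
  have := Fintype.ofFinite α
  have := Fintype.ofFinite β
  rw [Function.exists_surjective_iff, nonempty_fun, Function.Embedding.nonempty_iff_card_le,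
    ← Nat.card_eq_fintype_card, ← Nat.card_eq_fintype_card]
  exact ⟨(isEmpty_or_nonempty α).imp_right hne, hcard⟩

lemma exists_surjective_comp_eq {ι κ α : Type*} [Finite ι] [Finite κ] (p : ι → α) (q : κ → α)
    (hcard : ∀ a, Nat.card {i // p i = a} ≤ Nat.card {j // q j = a})
    (hrange : ∀ j, ∃ i, p i = q j) :
    ∃ π : κ → ι, Function.Surjective π ∧ ∀ j, p (π j) = q j := by
  have hfiber : ∀ a, ∃ s : {j // q j = a} → {i // p i = a}, Function.Surjective s := by
    intro a
    refine exists_surjective_of_card_le (hcard a) ?_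
    rintro ⟨j, rfl⟩
    obtain ⟨i, hi⟩ := hrange j
    exact ⟨i, hi⟩
  choose s hs using hfiber
  refine ⟨Equiv.sigmaFiberEquiv p ∘ Sigma.map id s ∘ (Equiv.sigmaFiberEquiv q).symm,
    (Equiv.surjective _).comp ((Function.surjective_id.sigma_map hs).comp (Equiv.surjective _)),
    fun j => (s (q j) ⟨j, rfl⟩).2⟩

section Patterns

variable {A : Type*} {Γ : Set (Set A)} {ρ σ : FinRel A}

lemma param_spec (hρ : ρ ∈ DD Γ) (hu : ρ.2 ≠ Set.univ) :
    (∀ i, param Γ ρ i ∈ Γ) ∧ ρ.2 = Cross (param Γ ρ) := by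
  obtain ⟨-, h⟩ := hρ
  rw [param, if_neg hu, dif_pos h]
  exact h.choose_spec

lemma param_of_eq_univ (hu : ρ.2 = Set.univ) : param Γ ρ = fun _ => Set.univ := by
  rw [param, if_pos hu]

lemma mem_supp_pt_iff (γ : ↥Γ) : γ ∈ supp (pt Γ ρ) ↔ ∃ i, param Γ ρ i = γ := by
  simp only [supp, pt, Set.mem_ofPred_eq, Nat.card_ne_zero, nonempty_subtype]
  exact and_iff_left inferInstance

/- The full relation is the one member of `DD Γ` whose canonical parameter `(A,…,A)` may lie
outside `Γ`; this lemma isolates it. -/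
lemma eq_univ_of_sle_pt (hρ : ρ ∈ DD Γ) (hσu : σ.2 = Set.univ) (hle : sle (pt Γ ρ) (pt Γ σ)) :
    ρ.2 = Set.univ := by
  by_contra hρu
  obtain ⟨hρΓ, hρC⟩ := param_spec hρ hρu
  let i₀ : Fin ρ.1 := ⟨0, hρ.1⟩
  have hsupp : (⟨param Γ ρ i₀, hρΓ i₀⟩ : ↥Γ) ∈ supp (pt Γ σ) :=
    hle.2 ▸ (mem_supp_pt_iff _).2 ⟨i₀, rfl⟩
  obtain ⟨j, hj⟩ := (mem_supp_pt_iff _).1 hsupp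
  have hi₀ : param Γ ρ i₀ = Set.univ := by simpa [param_of_eq_univ hσu] using hj.symm
  exact hρu (Set.eq_univ_of_forall fun x => by rw [hρC]; exact ⟨i₀, hi₀ ▸ trivial⟩)

lemma exists_surjective_param_comp (hρΓ : ∀ i, param Γ ρ i ∈ Γ) (hσΓ : ∀ j, param Γ σ j ∈ Γ)
    (hle : sle (pt Γ ρ) (pt Γ σ)) :
    ∃ π : Fin σ.1 → Fin ρ.1, Function.Surjective π ∧ ∀ j, param Γ ρ (π j) = param Γ σ j := by
  refine exists_surjective_comp_eq _ _ (fun a => ?_) (fun j => ?_)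
  · by_cases ha : a ∈ Γ
    · exact hle.1 ⟨a, ha⟩
    · have : IsEmpty {i // param Γ ρ i = a} := ⟨fun i => ha (i.2 ▸ hρΓ i)⟩
      simp
  · exact (mem_supp_pt_iff ⟨_, hσΓ j⟩).1 (hle.2 ▸ (mem_supp_pt_iff _).2 ⟨j, rfl⟩)

lemma Preserves.of_sle_pt {k : ℕ} {f : (Fin k → A) → A} (hρ : ρ ∈ DD Γ) (hσ : σ ∈ DD Γ)
    (hle : sle (pt Γ ρ) (pt Γ σ)) (hf : Preserves f σ.2) : Preserves f ρ.2 := by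
  by_cases hρu : ρ.2 = Set.univ
  · rw [hρu]
    exact fun _ _ => trivial
  have hσu : σ.2 ≠ Set.univ := fun h => hρu (eq_univ_of_sle_pt hρ h hle)
  obtain ⟨hρΓ, hρC⟩ := param_spec hρ hρu
  obtain ⟨hσΓ, hσC⟩ := param_spec hσ hσu
  obtain ⟨π, hπ, hcomp⟩ := exists_surjective_param_comp hρΓ hσΓ hle
  rw [hσC, ← funext hcomp] at hf
  exact hρC ▸ hf.cross_of_comp_surjective hπ

end Patterns

lemma isSleDownset_enc {A : Type*} (Γ : Set (Set A)) (Q : Set (FinRel A)) :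
    IsSleDownset (enc Γ Q) := by
  rintro x ⟨ρ, hρ, hx⟩ y hy
  exact ⟨ρ, hρ, hy.trans hx⟩

lemma pol_subset_pol_of_enc_subset {A : Type*} {Γ : Set (Set A)} {Q₁ Q₂ : Set (FinRel A)}
    (hQ₁ : Q₁ ⊆ DD Γ) (hQ₂ : Q₂ ⊆ DD Γ) (h : enc Γ Q₁ ⊆ enc Γ Q₂) : Pol Q₂ ⊆ Pol Q₁ := by
  intro f hf ρ hρ
  obtain ⟨σ, hσ, hle⟩ := h ⟨ρ, hρ, sle_refl _⟩
  exact Preserves.of_sle_pt (hQ₁ hρ) (hQ₂ hσ) hle (hf σ hσ)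

lemma pol_eq_pol_of_enc_eq {A : Type*} {Γ : Set (Set A)} {Q₁ Q₂ : Set (FinRel A)}
    (hQ₁ : Q₁ ⊆ DD Γ) (hQ₂ : Q₂ ⊆ DD Γ) (h : enc Γ Q₁ = enc Γ Q₂) : Pol Q₁ = Pol Q₂ :=
  (pol_subset_pol_of_enc_subset hQ₂ hQ₁ h.ge).antisymm (pol_subset_pol_of_enc_subset hQ₁ hQ₂ h.le)

lemma invDD_subset_DD {A : Type*} (Γ : Set (Set A)) (F : Set (Op A)) : InvDD Γ F ⊆ DD Γ :=
  fun _ hρ => hρ.1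

lemma pol_invDD_pol {A : Type*} {Γ : Set (Set A)} {Q : Set (FinRel A)} (hQ : Q ⊆ DD Γ) :
    Pol (InvDD Γ (Pol Q)) = Pol Q :=
  Set.Subset.antisymm (fun _ hf ρ hρ => hf ρ ⟨hQ hρ, fun _ hg => hg ρ hρ⟩)
    (fun f hf _ hρ => hρ.2 f hf)

/-- The number of polymorphism clones of sets of relations disjunctively definable
from `Γ` is at most the number of downsets of the poset `(ℕ^Γ, ⊑)`. -/
theorem mk_pol_le_mk_sle_downsets {A : Type*} (Γ : Set (Set A)) :
    Cardinal.mk {F : Set (Op A) | ∃ Q ⊆ DD Γ, F = Pol Q} ≤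
      Cardinal.mk {X : Set (↥Γ → ℕ) | IsSleDownset X} := by
  refine Cardinal.mk_le_of_injective
    (f := fun F => ⟨enc Γ (InvDD Γ F.val), isSleDownset_enc Γ _⟩) ?_
  rintro ⟨_, Q₁, hQ₁, rfl⟩ ⟨_, Q₂, hQ₂, rfl⟩ h
  refine Subtype.ext (?_ : Pol Q₁ = Pol Q₂)
  rw [← pol_invDD_pol hQ₁, ← pol_invDD_pol hQ₂]
  exact pol_eq_pol_of_enc_eq (invDD_subset_DD _ _) (invDD_subset_DD _ _) (congrArg Subtype.val h)
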